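/- arXiv:1006.3001 — 2 statements merged into one kernel-verified Lean document; each statement's English description precedes it below -/
import Mathlib

section
/- The characteristic polynomial of Δ(k) has real coefficients for every real k, and these coefficients depend on k only through cos k. -/
open Complex Matrix

/-- The Floquet matrix Δ(k) of the discrete Laplace–Beltrami operator. -/
noncomputable def Delta (k : ℝ) : Matrix (Fin 5) (Fin 5) ℂ :=
  ((Real.sqrt 3 : ℂ))⁻¹ •
    !![0, ((Real.sqrt 3 : ℂ))⁻¹, exp (I * k) / 2, 0, ((Real.sqrt 3 : ℂ))⁻¹;
       ((Real.sqrt 3 : ℂ))⁻¹, 0, 1 / 2, exp (I * k) / (Real.sqrt 3 : ℂ), 0;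
       exp (-(I * k)) / 2, 1 / 2, 0, 1 / 2, 1 / 2;
       0, exp (-(I * k)) / (Real.sqrt 3 : ℂ), 1 / 2, 0, ((Real.sqrt 3 : ℂ))⁻¹;
       ((Real.sqrt 3 : ℂ))⁻¹, 0, 1 / 2, ((Real.sqrt 3 : ℂ))⁻¹, 0]

lemma my_charpoly_transpose {n R : Type*} [Fintype n] [DecidableEq n] [CommRing R]
    (M : Matrix n n R) : Mᵀ.charpoly = M.charpoly := by
  rw [Matrix.charpoly, Matrix.charpoly, ← Matrix.det_transpose (Matrix.charmatrix Mᵀ)]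
  congr 1
  ext i j
  by_cases h : i = j
  · subst h
    simp [Matrix.charmatrix_apply_eq]
  · rw [Matrix.transpose_apply, Matrix.charmatrix_apply_ne _ _ _ h,
      Matrix.charmatrix_apply_ne _ _ _ (Ne.symm h), Matrix.transpose_apply]

lemma Delta_exp_eq {k1 k2 : ℝ} (h : exp (I * k1) = exp (I * k2)) : Delta k1 = Delta k2 := by
  unfold Delta
  rw [show exp (-(I * (k1:ℂ))) = (exp (I*(k1:ℂ)))⁻¹ from Complex.exp_neg _,
      show exp (-(I * (k2:ℂ))) = (exp (I*(k2:ℂ)))⁻¹ from Complex.exp_neg _, h]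

lemma Delta_neg (k : ℝ) : Delta (-k) = (Delta k)ᵀ := by
  unfold Delta
  push_cast
  ext i j
  fin_cases i <;> fin_cases j <;>
    simp [Matrix.transpose_apply, Matrix.vecHead, Matrix.vecTail, mul_neg]

lemma Delta_conj (k : ℝ) : (Delta k).map (starRingEnd ℂ) = (Delta k)ᵀ := by
  unfold Delta
  ext i j
  fin_cases i <;> fin_cases j <;>
    simp [Matrix.map_apply, Matrix.transpose_apply, Matrix.vecHead, Matrix.vecTail, map_div₀,
      ← Complex.exp_conj, mul_neg, Complex.conj_ofReal, _root_.map_mul, Complex.conj_I, map_ofNat]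

lemma exp_I_real (t : ℝ) : exp (I * t) = (Real.cos t : ℂ) + (Real.sin t : ℂ) * I := by
  rw [mul_comm, Complex.exp_mul_I, Complex.ofReal_cos, Complex.ofReal_sin]

lemma Delta_charpoly_neg (k : ℝ) : (Delta (-k)).charpoly = (Delta k).charpoly := by
  rw [Delta_neg, my_charpoly_transpose]

lemma Delta_charpoly_coeff_real (k : ℝ) (i : ℕ) :
    ((Delta k).charpoly.coeff i) = (((Delta k).charpoly.coeff i).re : ℂ) := by
  have h1 : ((Delta k).map (starRingEnd ℂ)).charpoly = (Delta k).charpoly := by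
    rw [Delta_conj, my_charpoly_transpose]
  have h2 : ((Delta k).charpoly.map (starRingEnd ℂ)).coeff i = (Delta k).charpoly.coeff i := by
    rw [← Matrix.charpoly_map (Delta k) (starRingEnd ℂ)]
    exact congrArg (fun p => Polynomial.coeff p i) h1
  rw [Polynomial.coeff_map] at h2
  exact (Complex.conj_eq_iff_re.mp h2).symm

/-- the characteristic polynomial of Δ(k) has real coefficients, and these
coefficients depend on k only through cos k. -/
theorem Delta_charpoly_real_coeff_cos :
    ∃ c : ℕ → ℝ → ℝ, ∀ (k : ℝ) (i : ℕ),
      ((Delta k).charpoly).coeff i = ((c i (Real.cos k) : ℝ) : ℂ) := by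
  refine ⟨fun i x => ((Delta (Real.arccos x)).charpoly.coeff i).re, fun k i => ?_⟩
  have hc : Real.cos (Real.arccos (Real.cos k)) = Real.cos k :=
    Real.cos_arccos (Real.neg_one_le_cos k) (Real.cos_le_one k)
  have hs : Real.sin (Real.arccos (Real.cos k)) = |Real.sin k| := by
    rw [Real.sin_arccos, ← Real.sin_sq_add_cos_sq k]
    rw [show Real.sin k ^ 2 + Real.cos k ^ 2 - Real.cos k ^ 2 = Real.sin k ^ 2 by ring,
      Real.sqrt_sq_eq_abs]
  have key : (Delta (Real.arccos (Real.cos k))).charpoly = (Delta k).charpoly := by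
    rcases abs_choice (Real.sin k) with h | h
    · rw [Delta_exp_eq (k2 := k)]
      rw [exp_I_real, exp_I_real, hc, hs, h]
    · rw [Delta_exp_eq (k2 := -k), Delta_charpoly_neg]
      rw [exp_I_real, exp_I_real, hc, hs, h, Real.cos_neg, Real.sin_neg]
  simp only [key]
  exact Delta_charpoly_coeff_real k i
end

section
/- The third eigenvalue function λ₃(k) of Δ(k) attains, at some k₀ ∈ (0, π), a value strictly smaller than both λ₃(0) and λ₃(π); hence the minimum of λ₃ over [0,π] is not attained at k = 0 or k = π. -/
open Complex

/-- The eigenvalues of a Hermitian matrix, sorted in nondecreasing order. -/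
noncomputable def sortedEig {n : ℕ} {A : Matrix (Fin n) (Fin n) ℂ}
    (hA : A.IsHermitian) : Fin n → ℝ :=
  hA.eigenvalues ∘ Tuple.sort hA.eigenvalues

private lemma Delta_eq (k : ℝ) : Delta k =
  ((Real.sqrt 3 : ℂ))⁻¹ •
    !![0, ((Real.sqrt 3 : ℂ))⁻¹, exp (I * k) / 2, 0, ((Real.sqrt 3 : ℂ))⁻¹;
       ((Real.sqrt 3 : ℂ))⁻¹, 0, 1 / 2, exp (I * k) / (Real.sqrt 3 : ℂ), 0;
       exp (-(I * k)) / 2, 1 / 2, 0, 1 / 2, 1 / 2;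
       0, exp (-(I * k)) / (Real.sqrt 3 : ℂ), 1 / 2, 0, ((Real.sqrt 3 : ℂ))⁻¹;
       ((Real.sqrt 3 : ℂ))⁻¹, 0, 1 / 2, ((Real.sqrt 3 : ℂ))⁻¹, 0] := rfl

set_option maxHeartbeats 1000000 in
private lemma detFive (a00 a01 a02 a03 a04 a10 a11 a12 a13 a14 a20 a21 a22 a23 a24 a30 a31 a32 a33 a34 a40 a41 a42 a43 a44 : ℂ) :
    Matrix.det !![a00,a01,a02,a03,a04; a10,a11,a12,a13,a14; a20,a21,a22,a23,a24;
      a30,a31,a32,a33,a34; a40,a41,a42,a43,a44] = a00*a11*a22*a33*a44 - a00*a11*a22*a34*a43 - a00*a11*a23*a32*a44 + a00*a11*a23*a34*a42 + a00*a11*a24*a32*a43 - a00*a11*a24*a33*a42 - a00*a12*a21*a33*a44 + a00*a12*a21*a34*a43 + a00*a12*a23*a31*a44 - a00*a12*a23*a34*a41 - a00*a12*a24*a31*a43 + a00*a12*a24*a33*a41 + a00*a13*a21*a32*a44 - a00*a13*a21*a34*a42 - a00*a13*a22*a31*a44 + a00*a13*a22*a34*a41 + a00*a13*a24*a31*a42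 - a00*a13*a24*a32*a41 - a00*a14*a21*a32*a43 + a00*a14*a21*a33*a42 + a00*a14*a22*a31*a43 - a00*a14*a22*a33*a41 - a00*a14*a23*a31*a42 + a00*a14*a23*a32*a41 - a01*a10*a22*a33*a44 + a01*a10*a22*a34*a43 + a01*a10*a23*a32*a44 - a01*a10*a23*a34*a42 - a01*a10*a24*a32*a43 + a01*a10*a24*a33*a42 + a01*a12*a20*a33*a44 - a01*a12*a20*a34*a43 - a01*a12*a23*a30*a44 + a01*a12*a23*a34*a40 + a01*a12*a24*a30*a43 - a01*a12*a24*a33*a40 - a01*a13*a20*a32*a44 + a01*a13*a20*a34*a42 + a01*a13*a22*a30*a44 - a01*a13*a22*a34*a40 - a01*a13*a24*a30*a42 + a01*a13*a24*a32*a40 + a01*a14*a20*a32*a43 - a01*a14*a20*a33*a42 - a01*a14*a22*a30*a43 + a01*a14*a22*a33*a40 + a01*a14*a23*a30*a42 - a01*a14*a23*a32*a40 + a02*a10*a21*a33*a44 - a02*a10*a21*a34*a43 - a02*a10*a23*a31*a44 + a02*a10*a23*a34*a41 + a02*a10*a24*a31*a43 - a02*a10*a24*a33*a41 - a02*a11*a20*a33*a44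 + a02*a11*a20*a34*a43 + a02*a11*a23*a30*a44 - a02*a11*a23*a34*a40 - a02*a11*a24*a30*a43 + a02*a11*a24*a33*a40 + a02*a13*a20*a31*a44 - a02*a13*a20*a34*a41 - a02*a13*a21*a30*a44 + a02*a13*a21*a34*a40 + a02*a13*a24*a30*a41 - a02*a13*a24*a31*a40 - a02*a14*a20*a31*a43 + a02*a14*a20*a33*a41 + a02*a14*a21*a30*a43 - a02*a14*a21*a33*a40 - a02*a14*a23*a30*a41 + a02*a14*a23*a31*a40 - a03*a10*a21*a32*a44 + a03*a10*a21*a34*a42 + a03*a10*a22*a31*a44 - a03*a10*a22*a34*a41 - a03*a10*a24*a31*a42 + a03*a10*a24*a32*a41 + a03*a11*a20*a32*a44 - a03*a11*a20*a34*a42 - a03*a11*a22*a30*a44 + a03*a11*a22*a34*a40 + a03*a11*a24*a30*a42 - a03*a11*a24*a32*a40 - a03*a12*a20*a31*a44 + a03*a12*a20*a34*a41 + a03*a12*a21*a30*a44 - a03*a12*a21*a34*a40 - a03*a12*a24*a30*a41 + a03*a12*a24*a31*a40 + a03*a14*a20*a31*a42 - a03*a14*a20*a32*a41 - a03*a14*a21*a30*a42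 + a03*a14*a21*a32*a40 + a03*a14*a22*a30*a41 - a03*a14*a22*a31*a40 + a04*a10*a21*a32*a43 - a04*a10*a21*a33*a42 - a04*a10*a22*a31*a43 + a04*a10*a22*a33*a41 + a04*a10*a23*a31*a42 - a04*a10*a23*a32*a41 - a04*a11*a20*a32*a43 + a04*a11*a20*a33*a42 + a04*a11*a22*a30*a43 - a04*a11*a22*a33*a40 - a04*a11*a23*a30*a42 + a04*a11*a23*a32*a40 + a04*a12*a20*a31*a43 - a04*a12*a20*a33*a41 - a04*a12*a21*a30*a43 + a04*a12*a21*a33*a40 + a04*a12*a23*a30*a41 - a04*a12*a23*a31*a40 - a04*a13*a20*a31*a42 + a04*a13*a20*a32*a41 + a04*a13*a21*a30*a42 - a04*a13*a21*a32*a40 - a04*a13*a22*a30*a41 + a04*a13*a22*a31*a40 := by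
  simp [Matrix.det_succ_row_zero, Fin.sum_univ_succ,
    show (Fin.succAbove (0:Fin 5) 0) = 1 by decide,
    show (Fin.succAbove (0:Fin 5) 1) = 2 by decide,
    show (Fin.succAbove (0:Fin 5) 2) = 3 by decide,
    show (Fin.succAbove (0:Fin 5) 3) = 4 by decide,
    show (Fin.succAbove (1:Fin 5) 0) = 0 by decide,
    show (Fin.succAbove (1:Fin 5) 1) = 2 by decide,
    show (Fin.succAbove (1:Fin 5) 2) = 3 by decide,
    show (Fin.succAbove (1:Fin 5) 3) = 4 by decide,
    show (Fin.succAbove (2:Fin 5) 0) = 0 by decide,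
    show (Fin.succAbove (2:Fin 5) 1) = 1 by decide,
    show (Fin.succAbove (2:Fin 5) 2) = 3 by decide,
    show (Fin.succAbove (2:Fin 5) 3) = 4 by decide,
    show (Fin.succAbove (3:Fin 5) 0) = 0 by decide,
    show (Fin.succAbove (3:Fin 5) 1) = 1 by decide,
    show (Fin.succAbove (3:Fin 5) 2) = 2 by decide,
    show (Fin.succAbove (3:Fin 5) 3) = 4 by decide,
    show (Fin.succAbove (4:Fin 5) 0) = 0 by decide,
    show (Fin.succAbove (4:Fin 5) 1) = 1 by decide,
    show (Fin.succAbove (4:Fin 5) 2) = 2 by decide,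
    show (Fin.succAbove (4:Fin 5) 3) = 3 by decide,
    show (Fin.succAbove (0:Fin 4) 0) = 1 by decide,
    show (Fin.succAbove (0:Fin 4) 1) = 2 by decide,
    show (Fin.succAbove (0:Fin 4) 2) = 3 by decide,
    show (Fin.succAbove (1:Fin 4) 0) = 0 by decide,
    show (Fin.succAbove (1:Fin 4) 1) = 2 by decide,
    show (Fin.succAbove (1:Fin 4) 2) = 3 by decide,
    show (Fin.succAbove (2:Fin 4) 0) = 0 by decide,
    show (Fin.succAbove (2:Fin 4) 1) = 1 by decide,
    show (Fin.succAbove (2:Fin 4) 2) = 3 by decide,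
    show (Fin.succAbove (3:Fin 4) 0) = 0 by decide,
    show (Fin.succAbove (3:Fin 4) 1) = 1 by decide,
    show (Fin.succAbove (3:Fin 4) 2) = 2 by decide,
    show (Fin.succAbove (0:Fin 3) 0) = 1 by decide,
    show (Fin.succAbove (0:Fin 3) 1) = 2 by decide,
    show (Fin.succAbove (1:Fin 3) 0) = 0 by decide,
    show (Fin.succAbove (1:Fin 3) 1) = 2 by decide,
    show (Fin.succAbove (2:Fin 3) 0) = 0 by decide,
    show (Fin.succAbove (2:Fin 3) 1) = 1 by decide,
    show (Fin.castSucc (0:Fin 4)) = 0 by decide,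
    show (Fin.castSucc (1:Fin 4)) = 1 by decide,
    show (Fin.castSucc (2:Fin 4)) = 2 by decide,
    show (Fin.castSucc (3:Fin 4)) = 3 by decide,
    show (Fin.castSucc (0:Fin 3)) = 0 by decide,
    show (Fin.castSucc (1:Fin 3)) = 1 by decide,
    show (Fin.castSucc (2:Fin 3)) = 2 by decide,
    show (Fin.castSucc (0:Fin 2)) = 0 by decide,
    show (Fin.castSucc (1:Fin 2)) = 1 by decide,
    show Fin.succ (0:Fin 4) = 1 by decide,
    show Fin.succ (1:Fin 4) = 2 by decide,
    show Fin.succ (2:Fin 4) = 3 by decide,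
    show Fin.succ (3:Fin 4) = 4 by decide,
    show Fin.succ (0:Fin 3) = 1 by decide,
    show Fin.succ (1:Fin 3) = 2 by decide,
    show Fin.succ (2:Fin 3) = 3 by decide,
    show Fin.succ (0:Fin 2) = 1 by decide,
    show Fin.succ (1:Fin 2) = 2 by decide]
  ring

private lemma specKey {A : Matrix (Fin 5) (Fin 5) ℂ} (hA : A.IsHermitian) (t : ℝ) :
    ((t : ℂ) • (1 : Matrix (Fin 5) (Fin 5) ℂ) - A).det
      = ∏ i, ((t : ℂ) - (hA.eigenvalues i : ℂ)) := by
  set U : Matrix (Fin 5) (Fin 5) ℂ := (Matrix.IsHermitian.eigenvectorUnitary hA : Matrix (Fin 5) (Fin 5) ℂ) with hUdef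
  have hU : U * star U = 1 := Matrix.mem_unitaryGroup_iff.mp (Matrix.IsHermitian.eigenvectorUnitary hA).2
  have hD : A = U * Matrix.diagonal (RCLike.ofReal ∘ hA.eigenvalues) * star U :=
    Matrix.IsHermitian.spectral_theorem hA
  have key : (t : ℂ) • (1 : Matrix (Fin 5) (Fin 5) ℂ) - A
      = U * ((t : ℂ) • (1 : Matrix (Fin 5) (Fin 5) ℂ) - Matrix.diagonal (RCLike.ofReal ∘ hA.eigenvalues)) * star U := by
    rw [Matrix.mul_sub, Matrix.sub_mul, ← hD]
    congr 1
    rw [Matrix.mul_smul, Matrix.mul_one, Matrix.smul_mul, hU]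
  rw [key, Matrix.det_mul, Matrix.det_mul, mul_comm, ← mul_assoc, ← Matrix.det_mul]
  rw [show star U * U = 1 from Matrix.mem_unitaryGroup_iff'.mp (Matrix.IsHermitian.eigenvectorUnitary hA).2,
    Matrix.det_one, one_mul]
  rw [Matrix.smul_one_eq_diagonal, Matrix.diagonal_sub, Matrix.det_diagonal]
  rfl


set_option maxHeartbeats 2000000 in
set_option maxRecDepth 40000 in
private lemma polyZero (hA : (Delta (0 : ℝ)).IsHermitian) (t : ℝ) :
    ∏ i, (t - hA.eigenvalues i) = t^5 - 7/9*t^3 - 2/9*t^2 := by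
  have hsr : Real.sqrt 3 * Real.sqrt 3 = 3 := Real.mul_self_sqrt (by norm_num)
  have hs : (Real.sqrt 3 : ℂ) * (Real.sqrt 3 : ℂ) = 3 := by
    exact_mod_cast congrArg (fun x : ℝ => (x : ℂ)) hsr
  have hs0 : (Real.sqrt 3 : ℂ) ≠ 0 := by
    simpa using Complex.ofReal_ne_zero.mpr (ne_of_gt (Real.sqrt_pos.mpr (by norm_num)))
  have hinv : (Real.sqrt 3 : ℂ)⁻¹ = (Real.sqrt 3 : ℂ)/3 := by
    field_simp
    linear_combination -hs
  have he : Complex.exp (I * ((0 : ℝ) : ℂ)) = 1 := by norm_num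
  have he' : Complex.exp (-(I * ((0 : ℝ) : ℂ))) = 1 := by norm_num
  have hM : (t:ℂ) • (1 : Matrix (Fin 5) (Fin 5) ℂ) - Delta (0 : ℝ) =
      !![(t:ℂ), -(((Real.sqrt 3 : ℂ))*((Real.sqrt 3 : ℂ))/9), -(((Real.sqrt 3 : ℂ))/6), 0, -(((Real.sqrt 3 : ℂ))*((Real.sqrt 3 : ℂ))/9);
        -(((Real.sqrt 3 : ℂ))*((Real.sqrt 3 : ℂ))/9), (t:ℂ), -(((Real.sqrt 3 : ℂ))/6), -(((Real.sqrt 3 : ℂ))*((Real.sqrt 3 : ℂ))/9), 0;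
        -(((Real.sqrt 3 : ℂ))/6), -(((Real.sqrt 3 : ℂ))/6), (t:ℂ), -(((Real.sqrt 3 : ℂ))/6), -(((Real.sqrt 3 : ℂ))/6);
        0, -(((Real.sqrt 3 : ℂ))*((Real.sqrt 3 : ℂ))/9), -(((Real.sqrt 3 : ℂ))/6), (t:ℂ), -(((Real.sqrt 3 : ℂ))*((Real.sqrt 3 : ℂ))/9);
        -(((Real.sqrt 3 : ℂ))*((Real.sqrt 3 : ℂ))/9), 0, -(((Real.sqrt 3 : ℂ))/6), -(((Real.sqrt 3 : ℂ))*((Real.sqrt 3 : ℂ))/9), (t:ℂ)] := by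
    have hD := Delta_eq (0 : ℝ)
    rw [he, he'] at hD
    ext i j
    fin_cases i <;> fin_cases j <;>
      (simp [hD, Matrix.one_apply, Matrix.vecHead, Matrix.vecTail, hinv];
       try (first
       | rfl
       | ring1
       | linear_combination ((Real.sqrt 3:ℂ)*I/18) * hs
       | linear_combination (-(Real.sqrt 3:ℂ)*I/18) * hs
       | linear_combination ((Real.sqrt 3:ℂ)*I/12) * hs
       | linear_combination (-(Real.sqrt 3:ℂ)*I/12) * hs
       | linear_combination ((Real.sqrt 3:ℂ)*I/36) * hs
       | linear_combination (-(1:ℂ)/18 - (Real.sqrt 3:ℂ)*I/18) * hs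
       | linear_combination (-(1:ℂ)/18 + (Real.sqrt 3:ℂ)*I/18) * hs
       | linear_combination (-(Real.sqrt 3:ℂ)*I/36) * hs
       | linear_combination ((1:ℂ)/9) * hs
       | linear_combination (-(1:ℂ)/9) * hs
       | linear_combination (((1:ℂ)/18) * I) * hs
       | linear_combination ((-(1:ℂ)/18) * I) * hs
       | linear_combination (((1:ℂ)/12) * I) * hs
       | linear_combination ((-(1:ℂ)/12) * I) * hs
       | linear_combination ((1:ℂ)/18) * hs
       | linear_combination (-(1:ℂ)/18) * hs))
  have key := specKey hA t
  rw [hM, detFive] at key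
  have hC : (((∏ i, (t - hA.eigenvalues i)) : ℝ) : ℂ) = ((t^5 - 7/9*t^3 - 2/9*t^2 : ℝ) : ℂ) := by
    push_cast
    rw [← key]
    set s := (Real.sqrt 3 : ℂ) with hsdef
    linear_combination ((-4/81)*(t:ℂ)^3*s^2 + (-7/27)*(t:ℂ)^3 + (-2/81)*(t:ℂ)^2*s^2 + (-2/27)*(t:ℂ)^2) * hs
  exact_mod_cast hC


set_option maxHeartbeats 2000000 in
set_option maxRecDepth 40000 in
private lemma polyPi (hA : (Delta (Real.pi)).IsHermitian) (t : ℝ) :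
    ∏ i, (t - hA.eigenvalues i) = t^5 - 7/9*t^3 + 1/9*t^2 + 10/81*t - 2/81 := by
  have hsr : Real.sqrt 3 * Real.sqrt 3 = 3 := Real.mul_self_sqrt (by norm_num)
  have hs : (Real.sqrt 3 : ℂ) * (Real.sqrt 3 : ℂ) = 3 := by
    exact_mod_cast congrArg (fun x : ℝ => (x : ℂ)) hsr
  have hs0 : (Real.sqrt 3 : ℂ) ≠ 0 := by
    simpa using Complex.ofReal_ne_zero.mpr (ne_of_gt (Real.sqrt_pos.mpr (by norm_num)))
  have hinv : (Real.sqrt 3 : ℂ)⁻¹ = (Real.sqrt 3 : ℂ)/3 := by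
    field_simp
    linear_combination -hs
  have he : Complex.exp (I * ((Real.pi : ℝ) : ℂ)) = -1 := by
    rw [mul_comm]; exact Complex.exp_pi_mul_I
  have he' : Complex.exp (-(I * ((Real.pi : ℝ) : ℂ))) = -1 := by
    rw [Complex.exp_neg, mul_comm, Complex.exp_pi_mul_I]; norm_num
  have hM : (t:ℂ) • (1 : Matrix (Fin 5) (Fin 5) ℂ) - Delta (Real.pi) =
      !![(t:ℂ), -(((Real.sqrt 3 : ℂ))*((Real.sqrt 3 : ℂ))/9), (((Real.sqrt 3 : ℂ))/6), 0, -(((Real.sqrt 3 : ℂ))*((Real.sqrt 3 : ℂ))/9);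
        -(((Real.sqrt 3 : ℂ))*((Real.sqrt 3 : ℂ))/9), (t:ℂ), -(((Real.sqrt 3 : ℂ))/6), (((Real.sqrt 3 : ℂ))*((Real.sqrt 3 : ℂ))/9), 0;
        (((Real.sqrt 3 : ℂ))/6), -(((Real.sqrt 3 : ℂ))/6), (t:ℂ), -(((Real.sqrt 3 : ℂ))/6), -(((Real.sqrt 3 : ℂ))/6);
        0, (((Real.sqrt 3 : ℂ))*((Real.sqrt 3 : ℂ))/9), -(((Real.sqrt 3 : ℂ))/6), (t:ℂ), -(((Real.sqrt 3 : ℂ))*((Real.sqrt 3 : ℂ))/9);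
        -(((Real.sqrt 3 : ℂ))*((Real.sqrt 3 : ℂ))/9), 0, -(((Real.sqrt 3 : ℂ))/6), -(((Real.sqrt 3 : ℂ))*((Real.sqrt 3 : ℂ))/9), (t:ℂ)] := by
    have hD := Delta_eq Real.pi
    rw [he, he'] at hD
    ext i j
    fin_cases i <;> fin_cases j <;>
      (simp [hD, Matrix.one_apply, Matrix.vecHead, Matrix.vecTail, hinv];
       try (first
       | rfl
       | ring1
       | linear_combination ((Real.sqrt 3:ℂ)*I/18) * hs
       | linear_combination (-(Real.sqrt 3:ℂ)*I/18) * hs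
       | linear_combination ((Real.sqrt 3:ℂ)*I/12) * hs
       | linear_combination (-(Real.sqrt 3:ℂ)*I/12) * hs
       | linear_combination ((Real.sqrt 3:ℂ)*I/36) * hs
       | linear_combination (-(1:ℂ)/18 - (Real.sqrt 3:ℂ)*I/18) * hs
       | linear_combination (-(1:ℂ)/18 + (Real.sqrt 3:ℂ)*I/18) * hs
       | linear_combination (-(Real.sqrt 3:ℂ)*I/36) * hs
       | linear_combination ((1:ℂ)/9) * hs
       | linear_combination (-(1:ℂ)/9) * hs
       | linear_combination (((1:ℂ)/18) * I) * hs
       | linear_combination ((-(1:ℂ)/18) * I) * hs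
       | linear_combination (((1:ℂ)/12) * I) * hs
       | linear_combination ((-(1:ℂ)/12) * I) * hs
       | linear_combination ((1:ℂ)/18) * hs
       | linear_combination (-(1:ℂ)/18) * hs))
  have key := specKey hA t
  rw [hM, detFive] at key
  have hC : (((∏ i, (t - hA.eigenvalues i)) : ℝ) : ℂ) = ((t^5 - 7/9*t^3 + 1/9*t^2 + 10/81*t - 2/81 : ℝ) : ℂ) := by
    push_cast
    rw [← key]
    set s := (Real.sqrt 3 : ℂ) with hsdef
    linear_combination ((-4/81)*(t:ℂ)^3*s^2 + (-7/27)*(t:ℂ)^3 + (1/81)*(t:ℂ)^2*s^2 + (1/27)*(t:ℂ)^2 + (4/6561)*(t:ℂ)*s^6 + (10/2187)*(t:ℂ)*s^4 + (10/729)*(t:ℂ)*s^2 + (10/243)*(t:ℂ) + (-2/6561)*s^6 + (-2/2187)*s^4 + (-2/729)*s^2 + (-2/243)) * hs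
  exact_mod_cast hC


set_option maxHeartbeats 2000000 in
set_option maxRecDepth 40000 in
private lemma polyQ (hA : (Delta (Real.pi/3)).IsHermitian) (t : ℝ) :
    ∏ i, (t - hA.eigenvalues i) = t^5 - 7/9*t^3 - 5/36*t^2 + 5/162*t + 1/324 := by
  have hsr : Real.sqrt 3 * Real.sqrt 3 = 3 := Real.mul_self_sqrt (by norm_num)
  have hs : (Real.sqrt 3 : ℂ) * (Real.sqrt 3 : ℂ) = 3 := by
    exact_mod_cast congrArg (fun x : ℝ => (x : ℂ)) hsr
  have hs0 : (Real.sqrt 3 : ℂ) ≠ 0 := by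
    simpa using Complex.ofReal_ne_zero.mpr (ne_of_gt (Real.sqrt_pos.mpr (by norm_num)))
  have hinv : (Real.sqrt 3 : ℂ)⁻¹ = (Real.sqrt 3 : ℂ)/3 := by
    field_simp
    linear_combination -hs
  have he : Complex.exp (I * ((Real.pi/3 : ℝ) : ℂ)) = 1/2 + (Real.sqrt 3 : ℂ)/2 * I := by
    rw [mul_comm, Complex.exp_mul_I, ← Complex.ofReal_cos, ← Complex.ofReal_sin,
      Real.cos_pi_div_three, Real.sin_pi_div_three]
    push_cast; ring
  have he' : Complex.exp (-(I * ((Real.pi/3 : ℝ) : ℂ))) = 1/2 - (Real.sqrt 3 : ℂ)/2 * I := by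
    rw [show -(I * ((Real.pi/3 : ℝ) : ℂ)) = ((-(Real.pi/3) : ℝ) : ℂ) * I by push_cast; ring,
      Complex.exp_mul_I, ← Complex.ofReal_cos, ← Complex.ofReal_sin, Real.cos_neg, Real.sin_neg,
      Real.cos_pi_div_three, Real.sin_pi_div_three]
    push_cast; ring
  have hM : (t:ℂ) • (1 : Matrix (Fin 5) (Fin 5) ℂ) - Delta (Real.pi/3) =
      !![(t:ℂ), -(((Real.sqrt 3 : ℂ))*((Real.sqrt 3 : ℂ))/9), -(((Real.sqrt 3 : ℂ))*(1+((Real.sqrt 3 : ℂ))*I)/12), 0, -(((Real.sqrt 3 : ℂ))*((Real.sqrt 3 : ℂ))/9);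
        -(((Real.sqrt 3 : ℂ))*((Real.sqrt 3 : ℂ))/9), (t:ℂ), -(((Real.sqrt 3 : ℂ))/6), -(((Real.sqrt 3 : ℂ))*((Real.sqrt 3 : ℂ))*(1+((Real.sqrt 3 : ℂ))*I)/18), 0;
        -(((Real.sqrt 3 : ℂ))*(1-((Real.sqrt 3 : ℂ))*I)/12), -(((Real.sqrt 3 : ℂ))/6), (t:ℂ), -(((Real.sqrt 3 : ℂ))/6), -(((Real.sqrt 3 : ℂ))/6);
        0, -(((Real.sqrt 3 : ℂ))*((Real.sqrt 3 : ℂ))*(1-((Real.sqrt 3 : ℂ))*I)/18), -(((Real.sqrt 3 : ℂ))/6), (t:ℂ), -(((Real.sqrt 3 : ℂ))*((Real.sqrt 3 : ℂ))/9);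
        -(((Real.sqrt 3 : ℂ))*((Real.sqrt 3 : ℂ))/9), 0, -(((Real.sqrt 3 : ℂ))/6), -(((Real.sqrt 3 : ℂ))*((Real.sqrt 3 : ℂ))/9), (t:ℂ)] := by
    have hD := Delta_eq (Real.pi/3)
    rw [he, he'] at hD
    ext i j
    fin_cases i <;> fin_cases j <;>
      (simp [hD, Matrix.one_apply, Matrix.vecHead, Matrix.vecTail, hinv];
       try (first
       | rfl
       | ring1
       | linear_combination ((Real.sqrt 3:ℂ)*I/18) * hs
       | linear_combination (-(Real.sqrt 3:ℂ)*I/18) * hs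
       | linear_combination ((Real.sqrt 3:ℂ)*I/12) * hs
       | linear_combination (-(Real.sqrt 3:ℂ)*I/12) * hs
       | linear_combination ((Real.sqrt 3:ℂ)*I/36) * hs
       | linear_combination (-(1:ℂ)/18 - (Real.sqrt 3:ℂ)*I/18) * hs
       | linear_combination (-(1:ℂ)/18 + (Real.sqrt 3:ℂ)*I/18) * hs
       | linear_combination (-(Real.sqrt 3:ℂ)*I/36) * hs
       | linear_combination ((1:ℂ)/9) * hs
       | linear_combination (-(1:ℂ)/9) * hs
       | linear_combination (((1:ℂ)/18) * I) * hs
       | linear_combination ((-(1:ℂ)/18) * I) * hs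
       | linear_combination (((1:ℂ)/12) * I) * hs
       | linear_combination ((-(1:ℂ)/12) * I) * hs
       | linear_combination ((1:ℂ)/18) * hs
       | linear_combination (-(1:ℂ)/18) * hs))
  have key := specKey hA t
  rw [hM, detFive] at key
  have hC : (((∏ i, (t - hA.eigenvalues i)) : ℝ) : ℂ) = ((t^5 - 7/9*t^3 - 5/36*t^2 + 5/162*t + 1/324 : ℝ) : ℂ) := by
    push_cast
    rw [← key]
    set s := (Real.sqrt 3 : ℂ) with hsdef
    linear_combination ((-1/324)*(t:ℂ)^3*s^4 + (-73/1296)*(t:ℂ)^3*s^2 + (-7/27)*(t:ℂ)^3 + (-5/324)*(t:ℂ)^2*s^2 + (-5/108)*(t:ℂ)^2 + (25/419904)*(t:ℂ)*s^8 + (109/419904)*(t:ℂ)*s^6 + (5/4374)*(t:ℂ)*s^4 + (5/1458)*(t:ℂ)*s^2 + (5/486)*(t:ℂ) + (1/104976)*s^8 + (1/26244)*s^6 + (1/8748)*s^4 + (1/2916)*s^2 + (1/972)) * hs + ((1/324)*(t:ℂ)^3*s^6 + (1/144)*(t:ℂ)^3*s^4 + (1/46656)*(t:ℂ)*s^10*I^2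 + (-25/419904)*(t:ℂ)*s^10 + (-1/23328)*(t:ℂ)*s^8 + (-1/104976)*s^10) * Complex.I_mul_I
  exact_mod_cast hC


private lemma root4 {x : ℝ} (hx : x^5 - 7/9*x^3 - 2/9*x^2 = 0) :
    x = 0 ∨ x = 1 ∨ x = -1/3 ∨ x = -2/3 := by
  have hfac : x*x*(x-1)*(x+1/3)*(x+2/3) = 0 := by linear_combination hx
  rcases mul_eq_zero.mp hfac with h1 | h1
  · rcases mul_eq_zero.mp h1 with h2 | h2
    · rcases mul_eq_zero.mp h2 with h3 | h3
      · rcases mul_eq_zero.mp h3 with h4 | h4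
        · exact Or.inl h4
        · exact Or.inl h4
      · exact Or.inr (Or.inl (by linarith))
    · exact Or.inr (Or.inr (Or.inl (by linarith)))
  · exact Or.inr (Or.inr (Or.inr (by linarith)))

private lemma pinpoint {a b t : ℝ} (hab : a ≤ b) (h : (t - a)*(t - b) < 0) : a < t ∧ t < b := by
  constructor
  · by_contra hh; push_neg at hh; nlinarith
  · by_contra hh; push_neg at hh; nlinarith

private lemma qneg {q r v : ℝ} (hr : r < 0) (hv : 0 < v) (h : q * r = v) : q < 0 := by
  by_contra hq; push_neg at hq; nlinarith

set_option maxHeartbeats 4000000 in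
/-- the third eigenvalue function λ₃ attains at some k₀ ∈ (0,π) a value
strictly smaller than both λ₃(0) and λ₃(π); hence its minimum over [0,π] is not attained
at k = 0 or k = π. -/
theorem Delta_lambda3_interior_min (h : ∀ k : ℝ, (Delta k).IsHermitian) :
    (∃ k₀ ∈ Set.Ioo (0 : ℝ) Real.pi,
      sortedEig (h k₀) 2 < min (sortedEig (h 0) 2) (sortedEig (h Real.pi) 2)) ∧
    ¬ (∀ k ∈ Set.Icc (0 : ℝ) Real.pi, sortedEig (h 0) 2 ≤ sortedEig (h k) 2) ∧
    ¬ (∀ k ∈ Set.Icc (0 : ℝ) Real.pi, sortedEig (h Real.pi) 2 ≤ sortedEig (h k) 2) := by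
  have pipos := Real.pi_pos
  have sortedProd : ∀ (k : ℝ) (t : ℝ),
      (t - sortedEig (h k) 0)*(t - sortedEig (h k) 1)*(t - sortedEig (h k) 2)*
      (t - sortedEig (h k) 3)*(t - sortedEig (h k) 4) = ∏ i, (t - (h k).eigenvalues i) := by
    intro k t
    have h2 : ∏ i, (t - (h k).eigenvalues (Tuple.sort (h k).eigenvalues i))
        = ∏ i, (t - (h k).eigenvalues i) :=
      Equiv.prod_comp (Tuple.sort (h k).eigenvalues) (fun i => t - (h k).eigenvalues i)
    rw [← h2, Fin.prod_univ_five]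
    rfl
  have hmono : ∀ k : ℝ, Monotone (sortedEig (h k)) := fun k => Tuple.monotone_sort _
  have hQ : sortedEig (h (Real.pi/3)) 2 < 0 := by
    set a := sortedEig (h (Real.pi/3)) 0
    set b := sortedEig (h (Real.pi/3)) 1
    set c := sortedEig (h (Real.pi/3)) 2
    set d := sortedEig (h (Real.pi/3)) 3
    set e := sortedEig (h (Real.pi/3)) 4
    have hP : ∀ t : ℝ, (t-a)*(t-b)*(t-c)*(t-d)*(t-e) = t^5 - 7/9*t^3 - 5/36*t^2 + 5/162*t + 1/324 := by
      intro t; rw [sortedProd (Real.pi/3) t, polyQ (h (Real.pi/3)) t]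
    have hab : a ≤ b := hmono _ (by decide : (0:Fin 5) ≤ 1)
    have hcd : c ≤ d := hmono _ (by decide : (2:Fin 5) ≤ 3)
    have hde : d ≤ e := hmono _ (by decide : (3:Fin 5) ≤ 4)
    by_contra hc; push_neg at hc
    have key : ∀ t : ℝ, t < 0 → (t-c)*((t-d)*(t-e)) < 0 := by
      intro t ht
      have h1 : t - c < 0 := by linarith
      have h2 : t - d < 0 := by linarith
      have h3 : t - e < 0 := by linarith
      exact mul_neg_of_neg_of_pos h1 (mul_pos_of_neg_of_neg h2 h3)
    have e1 : ((-1/2 - a)*(-1/2 - b)) * ((-1/2 - c)*((-1/2 - d)*(-1/2 - e))) = 49/2592 := by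
      linear_combination hP (-1/2)
    have e2 : ((-1/5 - a)*(-1/5 - b)) * ((-1/5 - c)*((-1/5 - d)*(-1/5 - e))) = -1387/506250 := by
      linear_combination hP (-1/5)
    have e3 : ((-1/20 - a)*(-1/20 - b)) * ((-1/20 - c)*((-1/20 - d)*(-1/20 - e))) = 335119/259200000 := by
      linear_combination hP (-1/20)
    have q1 : (-1/2 - a)*(-1/2 - b) < 0 :=
      qneg (key (-1/2) (by norm_num)) (by norm_num) e1
    have q3 : (-1/20 - a)*(-1/20 - b) < 0 :=
      qneg (key (-1/20) (by norm_num)) (by norm_num) e3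
    have p1 := pinpoint hab (show (-1/2 - a)*(-1/2 - b) < 0 by linarith) 
    have p3 := pinpoint hab (show (-1/20 - a)*(-1/20 - b) < 0 by linarith)
    have q2 : (-1/5 - a)*(-1/5 - b) < 0 := by
      have ha2 : a < -1/5 := by linarith [p1.1]
      have hb2 : -1/5 < b := by linarith [p3.2]
      nlinarith
    have r2 : (-1/5 - c)*((-1/5 - d)*(-1/5 - e)) < 0 := key (-1/5) (by norm_num)
    linarith [mul_pos_of_neg_of_neg q2 r2, e2]
  have hZ : 0 ≤ sortedEig (h 0) 2 := by
    set a := sortedEig (h 0) 0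
    set b := sortedEig (h 0) 1
    set c := sortedEig (h 0) 2
    set d := sortedEig (h 0) 3
    set e := sortedEig (h 0) 4
    have hP : ∀ t : ℝ, (t-a)*(t-b)*(t-c)*(t-d)*(t-e) = t^5 - 7/9*t^3 - 2/9*t^2 := by
      intro t; rw [sortedProd 0 t, polyZero (h 0) t]
    have hab : a ≤ b := hmono _ (by decide : (0:Fin 5) ≤ 1)
    have hbc : b ≤ c := hmono _ (by decide : (1:Fin 5) ≤ 2)
    by_contra hcneg; push_neg at hcneg
    have ra : a = 0 ∨ a = 1 ∨ a = -1/3 ∨ a = -2/3 := root4 (by linear_combination -hP a)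
    have rb : b = 0 ∨ b = 1 ∨ b = -1/3 ∨ b = -2/3 := root4 (by linear_combination -hP b)
    have rc : c = 0 ∨ c = 1 ∨ c = -1/3 ∨ c = -2/3 := root4 (by linear_combination -hP c)
    have rd : d = 0 ∨ d = 1 ∨ d = -1/3 ∨ d = -2/3 := root4 (by linear_combination -hP d)
    have re : e = 0 ∨ e = 1 ∨ e = -1/3 ∨ e = -2/3 := root4 (by linear_combination -hP e)
    have ra2 : a = -1/3 ∨ a = -2/3 := by
      rcases ra with h1|h1|h1|h1 <;> first | (exfalso; linarith) | (left; exact h1) | (right; exact h1)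
    have rb2 : b = -1/3 ∨ b = -2/3 := by
      rcases rb with h1|h1|h1|h1 <;> first | (exfalso; linarith) | (left; exact h1) | (right; exact h1)
    have rc2 : c = -1/3 ∨ c = -2/3 := by
      rcases rc with h1|h1|h1|h1 <;> first | (exfalso; linarith) | (left; exact h1) | (right; exact h1)
    have h2v : (2-a)*(2-b)*(2-c)*(2-d)*(2-e) = 224/9 := by
      rw [hP 2]; norm_num
    rcases ra2 with h1|h1 <;> rcases rb2 with h2|h2 <;> rcases rc2 with h3|h3 <;>
      rcases rd with h4|h4|h4|h4 <;> rcases re with h5|h5|h5|h5 <;>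
      rw [h1, h2, h3, h4, h5] at h2v <;> norm_num at h2v
  have hPI : 0 ≤ sortedEig (h Real.pi) 2 := by
    set a := sortedEig (h Real.pi) 0
    set b := sortedEig (h Real.pi) 1
    set c := sortedEig (h Real.pi) 2
    set d := sortedEig (h Real.pi) 3
    set e := sortedEig (h Real.pi) 4
    have hP : ∀ t : ℝ, (t-a)*(t-b)*(t-c)*(t-d)*(t-e) = t^5 - 7/9*t^3 + 1/9*t^2 + 10/81*t - 2/81 := by
      intro t; rw [sortedProd Real.pi t, polyPi (h Real.pi) t]
    have hab : a ≤ b := hmono _ (by decide : (0:Fin 5) ≤ 1)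
    have hbc : b ≤ c := hmono _ (by decide : (1:Fin 5) ≤ 2)
    have hde : d ≤ e := hmono _ (by decide : (3:Fin 5) ≤ 4)
    by_contra hcneg; push_neg at hcneg
    have key : ∀ t : ℝ, 0 ≤ t → 0 < (t-a)*((t-b)*(t-c)) := by
      intro t ht
      have h1 : 0 < t - a := by linarith
      have h2 : 0 < t - b := by linarith
      have h3 : 0 < t - c := by linarith
      exact mul_pos h1 (mul_pos h2 h3)
    have e1 : ((0 - a)*((0 - b)*(0 - c))) * ((0 - d)*(0 - e)) = -2/81 := by
      linear_combination hP 0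
    have e2 : ((3/10 - a)*((3/10 - b)*(3/10 - c))) * ((3/10 - d)*(3/10 - e)) = 30583/8100000 := by
      linear_combination hP (3/10)
    have e3 : ((1/2 - a)*((1/2 - b)*(1/2 - c))) * ((1/2 - d)*(1/2 - e)) = -1/864 := by
      linear_combination hP (1/2)
    have r1 : (0 - d)*(0 - e) < 0 := by
      nlinarith [key 0 le_rfl, e1]
    have r3 : (1/2 - d)*(1/2 - e) < 0 := by
      nlinarith [key (1/2) (by norm_num), e3]
    have p1 := pinpoint hde (show (0 - d)*(0 - e) < 0 by linarith)
    have p3 := pinpoint hde (show (1/2 - d)*(1/2 - e) < 0 by linarith)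
    have r2 : (3/10 - d)*(3/10 - e) < 0 := by
      have hd2 : d < 3/10 := by linarith [p1.1]
      have he2 : 3/10 < e := by linarith [p3.2]
      nlinarith
    linarith [mul_neg_of_pos_of_neg (key (3/10) (by norm_num)) r2, e2]
  refine ⟨⟨Real.pi/3, ⟨by linarith, by linarith⟩, ?_⟩, ?_, ?_⟩
  · exact lt_of_lt_of_le hQ (le_min hZ hPI)
  · intro hall
    have := hall (Real.pi/3) ⟨by linarith, by linarith⟩
    linarith
  · intro hall
    have := hall (Real.pi/3) ⟨by linarith, by linarith⟩
    linarith
end
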